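/- arXiv:2305.16074 — 7 statements merged into one kernel-verified Lean document; each statement's English description precedes it below -/
import Mathlib

section
/- The function r(p, v) = Σ_{i=1}^k v_i p_i ∏_{j<i} (1 - p_j), defined for p, v ∈ [0,1]^k with v_1 ≥ v_2 ≥ ... ≥ v_k, is monotonically nondecreasing in each coordinate p_i. -/
/-!
Peeling off the first slot gives `r(p, v) = v₀ p₀ + (1 - p₀) r(p ∘ succ, v ∘ succ)`, an affine
function of `p₀` with slope `v₀ - r(p ∘ succ, v ∘ succ)`. Since `v` is antitone, every reward of
the tail is at most `v₀`, so this slope is nonnegative; raising `p₀` therefore helps, and raising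
the later coordinates helps by induction because the coefficient `1 - p₀` is nonnegative.
-/

open Finset

variable {R : Type*} [CommRing R] {k : ℕ}

def reward (p v : Fin k → R) : R :=
  ∑ i, v i * p i * ∏ j ∈ univ.filter (· < i), (1 - p j)

theorem reward_zero (p v : Fin 0 → R) : reward p v = 0 := by
  simp [reward]

theorem reward_succ (p v : Fin (k + 1) → R) :
    reward p v = v 0 * p 0 + (1 - p 0) * reward (Fin.tail p) (Fin.tail v) := by
  rw [reward, reward, Fin.sum_univ_succ, mul_sum]
  congr 1
  · simp
  · refine sum_congr rfl fun i _ => ?_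
    rw [prod_filter, Fin.prod_univ_succ, ← prod_filter]
    simp only [Fin.succ_pos, if_true, Fin.succ_lt_succ_iff, Fin.tail]
    ring

section Ordered

variable [LinearOrder R] [IsStrictOrderedRing R]

theorem reward_le_of_le {p v : Fin k → R} {B : R} (hp : ∀ i, p i ∈ Set.Icc 0 1) (hB : 0 ≤ B)
    (hv : ∀ i, v i ≤ B) : reward p v ≤ B := by
  induction k with
  | zero => simpa [reward_zero] using hB
  | succ k ih =>
    have htail : reward (Fin.tail p) (Fin.tail v) ≤ B :=
      ih (fun i => hp i.succ) (fun i => hv i.succ)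
    obtain ⟨hp₀, hp₁⟩ := hp 0
    calc reward p v = v 0 * p 0 + (1 - p 0) * reward (Fin.tail p) (Fin.tail v) := reward_succ p v
      _ ≤ B * p 0 + (1 - p 0) * B := by
        gcongr
        exact hv 0
      _ = B := by ring

theorem reward_mono {p p' v : Fin k → R} (hp' : ∀ i, p' i ∈ Set.Icc 0 1) (hv₀ : 0 ≤ v)
    (hv : Antitone v) (hle : p ≤ p') : reward p v ≤ reward p' v := by
  induction k with
  | zero => simp [reward_zero]
  | succ k ih =>
    set r := reward (Fin.tail p) (Fin.tail v)
    set r' := reward (Fin.tail p') (Fin.tail v)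
    have htail : r ≤ r' :=
      ih (fun i => hp' i.succ) (fun i => hv₀ i.succ)
        (hv.comp_monotone Fin.strictMono_succ.monotone) (fun i => hle i.succ)
    have hslope : r' ≤ v 0 :=
      reward_le_of_le (fun i => hp' i.succ) (hv₀ 0) fun i => hv (Fin.zero_le i.succ)
    have hp₀ : p 0 ≤ 1 := (hle 0).trans (hp' 0).2
    calc reward p v = v 0 * p 0 + (1 - p 0) * r := reward_succ p v
      _ ≤ v 0 * p 0 + (1 - p 0) * r' := by gcongr
      _ = r' + p 0 * (v 0 - r') := by ring
      _ ≤ r' + p' 0 * (v 0 - r') := by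
        gcongr
        exact hle 0
      _ = reward p' v := by rw [reward_succ p' v]; ring

end Ordered

theorem reward_monotone_in_p_general
    {k : ℕ} (p p' v : Fin k → ℝ)
    (hp' : ∀ i, p' i ∈ Set.Icc (0:ℝ) 1)
    (hv : ∀ i, v i ∈ Set.Icc (0:ℝ) 1)
    (hvmono : ∀ i j : Fin k, i ≤ j → v j ≤ v i)
    (hle : ∀ i, p i ≤ p' i) :
    ∑ i, v i * p i * ∏ j ∈ univ.filter (fun j => j < i), (1 - p j)
      ≤ ∑ i, v i * p' i * ∏ j ∈ univ.filter (fun j => j < i), (1 - p' j) :=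
  reward_mono hp' (fun i => (hv i).1) (fun i j hij => hvmono i j hij) hle

theorem reward_monotone_in_p
    {k : ℕ} (p p' v : Fin k → ℝ)
    (hp : ∀ i, p i ∈ Set.Icc (0:ℝ) 1) (hp' : ∀ i, p' i ∈ Set.Icc (0:ℝ) 1)
    (hv : ∀ i, v i ∈ Set.Icc (0:ℝ) 1)
    (hvmono : ∀ i j : Fin k, i ≤ j → v j ≤ v i)
    (hle : ∀ i, p i ≤ p' i) :
    ∑ i, v i * p i * ∏ j ∈ univ.filter (fun j => j < i), (1 - p j)
      ≤ ∑ i, v i * p' i * ∏ j ∈ univ.filter (fun j => j < i), (1 - p' j) :=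
  reward_monotone_in_p_general p p' v hp' hv hvmono hle
end

section
/- (RTPM smoothness) Let p, p', v, v' ∈ [0,1]^k with v_1 ≥ ... ≥ v_k and v'_1 ≥ ... ≥ v'_k, and define r(p,v) = Σ_{i=1}^k v_i p_i ∏_{j<i}(1-p_j), q_i(p) = ∏_{j<i}(1-p_j), and q̃_i(p) = p_i ∏_{j<i}(1-p_j). Then |r(p,v) - r(p',v')| ≤ 2 Σ_{i=1}^k q_i(p) v'_i |p_i - p'_i| + Σ_{i=1}^k q̃_i(p) |v_i - v'_i|. -/
/-!
Peeling off the first position gives `r(p, v) = v₀ p₀ + (1 - p₀) r(tail p, tail v)`, so by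
induction on `k` it suffices to bound one step. Writing `R, R'` for the rewards of the tails,
`r(p, v) - r(p', v') = p₀ (v₀ - v'₀) + v'₀ (p₀ - p'₀) + (p'₀ - p₀) R' + (1 - p₀) (R - R')`,
and `0 ≤ R' ≤ v'₀` because `v'` is nonnegative and nonincreasing; this is where the factor `2`
comes from.
-/

open Finset

namespace Rtpm

variable {k : ℕ}

/-- `q_i(p)`. -/
def survival (p : Fin k → ℝ) (i : Fin k) : ℝ :=
  ∏ j ∈ univ.filter (fun j => j < i), (1 - p j)

/-- `r(p, v)`. -/
def reward (p v : Fin k → ℝ) : ℝ :=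
  ∑ i, v i * p i * survival p i

@[simp]
lemma survival_zero (p : Fin (k + 1) → ℝ) : survival p 0 = 1 := by
  simp [survival]

lemma survival_succ (p : Fin (k + 1) → ℝ) (i : Fin k) :
    survival p i.succ = (1 - p 0) * survival (Fin.tail p) i := by
  simp only [survival, prod_filter, Fin.prod_univ_succ, Fin.succ_pos, if_true,
    Fin.succ_lt_succ_iff, Fin.tail]

lemma survival_nonneg {p : Fin k → ℝ} (hp : ∀ i, p i ≤ 1) (i : Fin k) : 0 ≤ survival p i :=
  prod_nonneg fun j _ => sub_nonneg.mpr (hp j)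

lemma reward_succ (p v : Fin (k + 1) → ℝ) :
    reward p v = v 0 * p 0 + (1 - p 0) * reward (Fin.tail p) (Fin.tail v) := by
  simp only [reward, Fin.sum_univ_succ, survival_zero, survival_succ, Fin.tail, mul_sum]
  ring_nf

lemma reward_nonneg {p v : Fin k → ℝ} (hp : ∀ i, p i ∈ Set.Icc (0 : ℝ) 1)
    (hv : ∀ i, 0 ≤ v i) : 0 ≤ reward p v :=
  sum_nonneg fun i _ => mul_nonneg (mul_nonneg (hv i) (hp i).1) (survival_nonneg (hp · |>.2) i)

lemma reward_le {p v : Fin k → ℝ} {c : ℝ} (hp : ∀ i, p i ∈ Set.Icc (0 : ℝ) 1)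
    (hc : 0 ≤ c) (hv : ∀ i, v i ≤ c) : reward p v ≤ c := by
  induction k with
  | zero => simpa [reward] using hc
  | succ k ih =>
    have hR : reward (Fin.tail p) (Fin.tail v) ≤ c := ih (fun i => hp _) (fun i => hv _)
    rw [reward_succ]
    linarith [mul_le_mul_of_nonneg_left hR (sub_nonneg.mpr (hp 0).2),
      mul_le_mul_of_nonneg_right (hv 0) (hp 0).1]

lemma abs_reward_sub_le (p p' v v' : Fin k → ℝ)
    (hp : ∀ i, p i ∈ Set.Icc (0 : ℝ) 1) (hp' : ∀ i, p' i ∈ Set.Icc (0 : ℝ) 1)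
    (hv' : ∀ i, 0 ≤ v' i) (hv'_anti : Antitone v') :
    |reward p v - reward p' v'|
      ≤ 2 * ∑ i, survival p i * v' i * |p i - p' i|
        + ∑ i, p i * survival p i * |v i - v' i| := by
  induction k with
  | zero => simp [reward]
  | succ k ih =>
    have htail := ih (Fin.tail p) (Fin.tail p') (Fin.tail v) (Fin.tail v') (fun i => hp _)
      (fun i => hp' _) (fun i => hv' _) (fun i j hij => hv'_anti (Fin.succ_le_succ_iff.mpr hij))
    set R := reward (Fin.tail p) (Fin.tail v)
    set R' := reward (Fin.tail p') (Fin.tail v')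
    have hR'_nonneg : 0 ≤ R' := reward_nonneg (fun i => hp' _) (fun i => hv' _)
    have hR'_le : R' ≤ v' 0 :=
      reward_le (fun i => hp' _) (hv' 0) (fun i => hv'_anti (Fin.zero_le _))
    have hsplit : reward p v - reward p' v' = p 0 * (v 0 - v' 0) + v' 0 * (p 0 - p' 0)
        + (p' 0 - p 0) * R' + (1 - p 0) * (R - R') := by
      rw [reward_succ, reward_succ]
      ring
    have hbound : 2 * ∑ i, survival p i * v' i * |p i - p' i|
          + ∑ i, p i * survival p i * |v i - v' i|
        = p 0 * |v 0 - v' 0| + 2 * v' 0 * |p 0 - p' 0| + (1 - p 0) *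
          (2 * ∑ i, survival (Fin.tail p) i * Fin.tail v' i * |Fin.tail p i - Fin.tail p' i|
            + ∑ i, Fin.tail p i * survival (Fin.tail p) i * |Fin.tail v i - Fin.tail v' i|) := by
      simp only [Fin.sum_univ_succ, survival_zero, survival_succ, Fin.tail, mul_add, mul_sum]
      ring_nf
    have hp₀ := hp 0
    rw [hsplit, hbound]
    calc _ ≤ |p 0 * (v 0 - v' 0)| + |v' 0 * (p 0 - p' 0)| + |(p' 0 - p 0) * R'|
            + |(1 - p 0) * (R - R')| :=
          (abs_add_le _ _).trans (add_le_add_left (abs_add_three _ _ _) _)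
      _ = p 0 * |v 0 - v' 0| + v' 0 * |p 0 - p' 0| + |p 0 - p' 0| * R'
            + (1 - p 0) * |R - R'| := by
        rw [abs_mul, abs_mul, abs_mul, abs_mul, abs_of_nonneg hp₀.1, abs_of_nonneg (hv' 0),
          abs_sub_comm (p' 0), abs_of_nonneg hR'_nonneg, abs_of_nonneg (sub_nonneg.mpr hp₀.2)]
      _ ≤ _ := by
        linarith [mul_le_mul_of_nonneg_left hR'_le (abs_nonneg (p 0 - p' 0)),
          mul_le_mul_of_nonneg_left htail (sub_nonneg.mpr hp₀.2)]

end Rtpm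

open Rtpm in
theorem rtpm_smoothness_general
    {k : ℕ} (p p' v v' : Fin k → ℝ)
    (hp : ∀ i, p i ∈ Set.Icc (0:ℝ) 1) (hp' : ∀ i, p' i ∈ Set.Icc (0:ℝ) 1)
    (hv' : ∀ i, v' i ∈ Set.Icc (0:ℝ) 1)
    (hv'mono : ∀ i j : Fin k, i ≤ j → v' j ≤ v' i) :
    |(∑ i, v i * p i * ∏ j ∈ univ.filter (fun j => j < i), (1 - p j))
      - ∑ i, v' i * p' i * ∏ j ∈ univ.filter (fun j => j < i), (1 - p' j)|
      ≤ 2 * ∑ i, (∏ j ∈ univ.filter (fun j => j < i), (1 - p j)) * v' i * |p i - p' i|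
        + ∑ i, (p i * ∏ j ∈ univ.filter (fun j => j < i), (1 - p j)) * |v i - v' i| :=
  abs_reward_sub_le p p' v v' hp hp' (fun i => (hv' i).1) hv'mono

theorem rtpm_smoothness
    {k : ℕ} (p p' v v' : Fin k → ℝ)
    (hp : ∀ i, p i ∈ Set.Icc (0:ℝ) 1) (hp' : ∀ i, p' i ∈ Set.Icc (0:ℝ) 1)
    (hv : ∀ i, v i ∈ Set.Icc (0:ℝ) 1) (hv' : ∀ i, v' i ∈ Set.Icc (0:ℝ) 1)
    (hvmono : ∀ i j : Fin k, i ≤ j → v j ≤ v i)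
    (hv'mono : ∀ i j : Fin k, i ≤ j → v' j ≤ v' i) :
    |(∑ i, v i * p i * ∏ j ∈ univ.filter (fun j => j < i), (1 - p j))
      - ∑ i, v' i * p' i * ∏ j ∈ univ.filter (fun j => j < i), (1 - p' j)|
      ≤ 2 * ∑ i, (∏ j ∈ univ.filter (fun j => j < i), (1 - p j)) * v' i * |p i - p' i|
        + ∑ i, (p i * ∏ j ∈ univ.filter (fun j => j < i), (1 - p j)) * |v i - v' i| :=
  rtpm_smoothness_general p p' v v' hp hp' hv' hv'mono
end

section
/- Let p, p', v, v' ∈ [0,1]^k with v_1 ≥ ... ≥ v_k, v'_1 ≥ ... ≥ v'_k, and p_i ≥ p'_i for all i. Then r(p,v) - r(p',v') ≤ Σ_{i=1}^k q_i(p) v'_i (p_i - p'_i) + Σ_{i=1}^k q̃_i(p) |v_i - v'_i|, where r(p,v) = Σ_{i=1}^k v_i p_i ∏_{j<i}(1-p_j), q_i(p) = ∏_{j<i}(1-p_j), and q̃_i(p) = p_i q_i(p). -/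
/-!
The bound holds term by term. Splitting the `i`-th term of `r(p,v) - r(p',v')` through
`v'ᵢ pᵢ qᵢ(p)` leaves `pᵢ qᵢ(p) (vᵢ - v'ᵢ) + v'ᵢ (pᵢ qᵢ(p) - p'ᵢ qᵢ(p'))`, and since raising the
stopping probabilities lowers the survival probability, `qᵢ(p) ≤ qᵢ(p')`, so the second part is
at most `qᵢ(p) v'ᵢ (pᵢ - p'ᵢ)`.
-/

open Finset

variable {ι : Type*}

lemma prod_one_sub_le_prod_one_sub {s : Finset ι} {p p' : ι → ℝ} (hp : ∀ j ∈ s, p j ≤ 1)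
    (hpp' : ∀ j ∈ s, p' j ≤ p j) : ∏ j ∈ s, (1 - p j) ≤ ∏ j ∈ s, (1 - p' j) :=
  prod_le_prod (fun j hj => sub_nonneg.2 (hp j hj)) fun j hj => sub_le_sub_left (hpp' j hj) 1

lemma sum_mul_mul_sub_sum_mul_mul_le (s : Finset ι) {v v' a a' q q' : ι → ℝ}
    (ha : ∀ i ∈ s, 0 ≤ a i) (ha' : ∀ i ∈ s, 0 ≤ a' i) (hv' : ∀ i ∈ s, 0 ≤ v' i)
    (hq : ∀ i ∈ s, 0 ≤ q i) (hqq' : ∀ i ∈ s, q i ≤ q' i) :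
    ∑ i ∈ s, v i * a i * q i - ∑ i ∈ s, v' i * a' i * q' i
      ≤ ∑ i ∈ s, q i * v' i * (a i - a' i) + ∑ i ∈ s, a i * q i * |v i - v' i| := by
  rw [← sum_sub_distrib, ← sum_add_distrib]
  refine sum_le_sum fun i hi => ?_
  have hv : a i * q i * (v i - v' i) ≤ a i * q i * |v i - v' i| :=
    mul_le_mul_of_nonneg_left (le_abs_self _) (mul_nonneg (ha i hi) (hq i hi))
  have hq' : v' i * a' i * q i ≤ v' i * a' i * q' i :=
    mul_le_mul_of_nonneg_left (hqq' i hi) (mul_nonneg (hv' i hi) (ha' i hi))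
  linear_combination hv + hq'

theorem rtpm_smoothness_monotone_general
    {k : ℕ} (p p' v v' : Fin k → ℝ)
    (hp : ∀ i, p i ∈ Set.Icc (0:ℝ) 1) (hp' : ∀ i, p' i ∈ Set.Icc (0:ℝ) 1)
    (hv' : ∀ i, v' i ∈ Set.Icc (0:ℝ) 1)
    (hpp' : ∀ i, p' i ≤ p i) :
    (∑ i, v i * p i * ∏ j ∈ univ.filter (fun j => j < i), (1 - p j))
      - (∑ i, v' i * p' i * ∏ j ∈ univ.filter (fun j => j < i), (1 - p' j))
      ≤ (∑ i, (∏ j ∈ univ.filter (fun j => j < i), (1 - p j)) * v' i * (p i - p' i))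
        + ∑ i, (p i * ∏ j ∈ univ.filter (fun j => j < i), (1 - p j)) * |v i - v' i| :=
  sum_mul_mul_sub_sum_mul_mul_le univ (fun i _ => (hp i).1) (fun i _ => (hp' i).1)
    (fun i _ => (hv' i).1) (fun _ _ => prod_nonneg fun j _ => sub_nonneg.2 (hp j).2)
    fun _ _ => prod_one_sub_le_prod_one_sub (fun j _ => (hp j).2) fun j _ => hpp' j

theorem rtpm_smoothness_monotone
    {k : ℕ} (p p' v v' : Fin k → ℝ)
    (hp : ∀ i, p i ∈ Set.Icc (0:ℝ) 1) (hp' : ∀ i, p' i ∈ Set.Icc (0:ℝ) 1)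
    (hv : ∀ i, v i ∈ Set.Icc (0:ℝ) 1) (hv' : ∀ i, v' i ∈ Set.Icc (0:ℝ) 1)
    (hvmono : ∀ i j : Fin k, i ≤ j → v j ≤ v i)
    (hv'mono : ∀ i j : Fin k, i ≤ j → v' j ≤ v' i)
    (hpp' : ∀ i, p' i ≤ p i) :
    (∑ i, v i * p i * ∏ j ∈ univ.filter (fun j => j < i), (1 - p j))
      - (∑ i, v' i * p' i * ∏ j ∈ univ.filter (fun j => j < i), (1 - p' j))
      ≤ (∑ i, (∏ j ∈ univ.filter (fun j => j < i), (1 - p j)) * v' i * (p i - p' i))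
        + ∑ i, (p i * ∏ j ∈ univ.filter (fun j => j < i), (1 - p j)) * |v i - v' i| :=
  rtpm_smoothness_monotone_general p p' v v' hp hp' hv' hpp'
end

section
/- (Arm equivalence) Let p, v ∈ [0,1]^k with v_1 ≥ ... ≥ v_k, and define p'_i = p_i v_i and v'_i = 1 for all i. Then r(p, v) ≤ r(p', v'), i.e. Σ_{i=1}^k v_i p_i ∏_{j<i}(1 - p_j) ≤ Σ_{i=1}^k p_i v_i ∏_{j<i}(1 - p_j v_j). -/
open Finset

theorem Finset.prod_one_sub_le_prod_one_sub_mul {ι R : Type*} [CommRing R] [LinearOrder R]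
    [IsStrictOrderedRing R] (s : Finset ι) (p v : ι → R)
    (hp : ∀ j ∈ s, p j ∈ Set.Icc (0 : R) 1) (hv : ∀ j ∈ s, v j ≤ 1) :
    ∏ j ∈ s, (1 - p j) ≤ ∏ j ∈ s, (1 - p j * v j) := by
  refine prod_le_prod (fun j hj => sub_nonneg.2 (hp j hj).2) fun j hj => ?_
  have : p j * v j ≤ p j := mul_le_of_le_one_right (hp j hj).1 (hv j hj)
  linarith

theorem arm_equivalence_general
    {k : ℕ} (p v : Fin k → ℝ)
    (hp : ∀ i, p i ∈ Set.Icc (0:ℝ) 1) (hv : ∀ i, v i ∈ Set.Icc (0:ℝ) 1) :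
    ∑ i, v i * p i * ∏ j ∈ univ.filter (fun j => j < i), (1 - p j)
      ≤ ∑ i, p i * v i * ∏ j ∈ univ.filter (fun j => j < i), (1 - p j * v j) := by
  refine sum_le_sum fun i _ => ?_
  rw [mul_comm (v i) (p i)]
  exact mul_le_mul_of_nonneg_left
    (prod_one_sub_le_prod_one_sub_mul _ p v (fun j _ => hp j) fun j _ => (hv j).2)
    (mul_nonneg (hp i).1 (hv i).1)

theorem arm_equivalence
    {k : ℕ} (p v : Fin k → ℝ)
    (hp : ∀ i, p i ∈ Set.Icc (0:ℝ) 1) (hv : ∀ i, v i ∈ Set.Icc (0:ℝ) 1)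
    (hvmono : ∀ i j : Fin k, i ≤ j → v j ≤ v i) :
    ∑ i, v i * p i * ∏ j ∈ univ.filter (fun j => j < i), (1 - p j)
      ≤ ∑ i, p i * v i * ∏ j ∈ univ.filter (fun j => j < i), (1 - p j * v j) :=
  arm_equivalence_general p v hp hv
end

section
/- Let p, v ∈ [0,1]^k with v_1 ≥ ... ≥ v_k. For any index m, replacing (p_m, v_m) by (p_m v_m, 1) does not decrease the expected max-reward: Σ_{i=1}^k v_i p_i ∏_{j<i}(1-p_j) ≤ Σ_{i<m} v_i p_i ∏_{j<i}(1-p_j) + p_m v_m ∏_{j<m}(1-p_j) + Σ_{i>m} v_i p_i (1 - p_m v_m) ∏_{j<i, j≠m}(1-p_j). -/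
/-! The terms before `m` are unchanged and the `m`-th term is the same product. In every term
after `m` the factor `1 - p m` of the survival probability becomes `1 - p m * v m`, which is
at least as large because `v m ≤ 1`, while the remaining factors are nonnegative. -/

open Finset

theorem Finset.sum_univ_eq_sum_lt_add_add_sum_gt {ι M : Type*} [Fintype ι] [LinearOrder ι]
    [AddCommMonoid M] (f : ι → M) (m : ι) :
    ∑ i, f i = (∑ i ∈ univ.filter (· < m), f i) + f m + ∑ i ∈ univ.filter (m < ·), f i := by
  have hge : univ.filter (fun i => ¬ i < m) = insert m (univ.filter (m < ·)) := by
    ext i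
    simp only [mem_filter, mem_univ, true_and, mem_insert, not_lt, le_iff_eq_or_lt, eq_comm]
  rw [← sum_filter_add_sum_filter_not univ (· < m) f, hge, sum_insert (by simp), add_assoc]

theorem Finset.prod_filter_eq_mul_prod_filter_and_ne {ι M : Type*} [Fintype ι] [DecidableEq ι]
    [CommMonoid M] (P : ι → Prop) [DecidablePred P] (g : ι → M) {m : ι} (hm : P m) :
    ∏ j ∈ univ.filter P, g j = g m * ∏ j ∈ univ.filter (fun j => P j ∧ j ≠ m), g j := by
  rw [← mul_prod_erase _ g (mem_filter.mpr ⟨mem_univ m, hm⟩)]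
  congr 2
  ext j
  simp only [mem_erase, mem_filter, mem_univ, true_and, and_comm]

theorem arm_equivalence_single_general
    {k : ℕ} (p v : Fin k → ℝ)
    (hp : ∀ i, p i ∈ Set.Icc (0:ℝ) 1) (hv : ∀ i, v i ∈ Set.Icc (0:ℝ) 1)
    (m : Fin k) :
    ∑ i, v i * p i * ∏ j ∈ univ.filter (fun j => j < i), (1 - p j)
      ≤ (∑ i ∈ univ.filter (fun i => i < m),
            v i * p i * ∏ j ∈ univ.filter (fun j => j < i), (1 - p j))
        + p m * v m * ∏ j ∈ univ.filter (fun j => j < m), (1 - p j)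
        + ∑ i ∈ univ.filter (fun i => m < i),
            v i * p i * (1 - p m * v m)
              * ∏ j ∈ univ.filter (fun j => j < i ∧ j ≠ m), (1 - p j) := by
  rw [sum_univ_eq_sum_lt_add_add_sum_gt _ m, mul_comm (v m) (p m)]
  refine add_le_add_right (sum_le_sum fun i hi => ?_) _
  rw [prod_filter_eq_mul_prod_filter_and_ne (· < i) _ (mem_filter.mp hi).2, ← mul_assoc]
  have hrest : 0 ≤ ∏ j ∈ univ.filter (fun j => j < i ∧ j ≠ m), (1 - p j) :=
    prod_nonneg fun j _ => sub_nonneg.mpr (hp j).2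
  have hvp : 0 ≤ v i * p i := mul_nonneg (hv i).1 (hp i).1
  have hpv : p m * v m ≤ p m := mul_le_of_le_one_right (hp m).1 (hv m).2
  gcongr

theorem arm_equivalence_single
    {k : ℕ} (p v : Fin k → ℝ)
    (hp : ∀ i, p i ∈ Set.Icc (0:ℝ) 1) (hv : ∀ i, v i ∈ Set.Icc (0:ℝ) 1)
    (hvmono : ∀ i j : Fin k, i ≤ j → v j ≤ v i) (m : Fin k) :
    ∑ i, v i * p i * ∏ j ∈ univ.filter (fun j => j < i), (1 - p j)
      ≤ (∑ i ∈ univ.filter (fun i => i < m),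
            v i * p i * ∏ j ∈ univ.filter (fun j => j < i), (1 - p j))
        + p m * v m * ∏ j ∈ univ.filter (fun j => j < m), (1 - p j)
        + ∑ i ∈ univ.filter (fun i => m < i),
            v i * p i * (1 - p m * v m)
              * ∏ j ∈ univ.filter (fun j => j < i ∧ j ≠ m), (1 - p j) :=
  arm_equivalence_single_general p v hp hv m
end

section
/- Let p, v ∈ [0,1]^k with v_1 ≥ ... ≥ v_k, and let p' be defined by p'_i = p_i v_i, v'_i = 1. Then r(p', v') - r(p, v) ≤ 2 Σ_{i=1}^k q_i(p) (p_i - p'_i) + Σ_{i=1}^k q̃_i(p) (1 - v_i), where q_i(p) = ∏_{j<i}(1-p_j), q̃_i(p) = p_i q_i(p), and r(p,v) = Σ_{i=1}^k v_i p_i ∏_{j<i}(1-p_j). -/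
open Finset

/- The first sum in the bound is the acceptance probability `1 - ∏ (1 - p_i v_i)` of the
replacement arms, which is at most the acceptance probability `1 - ∏ (1 - p_i)` of the original
ones. Hence the error is at most `∑ p_i q_i (1 - v_i)`, and the remaining term is nonnegative. -/

theorem sum_mul_prod_filter_lt_one_sub_le_of_le {ι R : Type*} [LinearOrder ι] [CommRing R]
    [PartialOrder R] [IsOrderedRing R] (s : Finset ι) {f g : ι → R}
    (hgf : ∀ i ∈ s, g i ≤ f i) (hf : ∀ i ∈ s, f i ≤ 1) :
    ∑ i ∈ s, g i * ∏ j ∈ s with j < i, (1 - g j)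
      ≤ ∑ i ∈ s, f i * ∏ j ∈ s with j < i, (1 - f j) := by
  have hprod : ∏ i ∈ s, (1 - f i) ≤ ∏ i ∈ s, (1 - g i) :=
    prod_le_prod (fun i hi => sub_nonneg.2 (hf i hi)) fun i hi => sub_le_sub_left (hgf i hi) 1
  rwa [prod_one_sub_ordered, prod_one_sub_ordered, sub_le_sub_iff_left] at hprod

theorem replacement_error_bound_general
    {k : ℕ} (p v : Fin k → ℝ)
    (hp : ∀ i, p i ∈ Set.Icc (0:ℝ) 1) (hv : ∀ i, v i ∈ Set.Icc (0:ℝ) 1) :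
    (∑ i, (1:ℝ) * (p i * v i) * ∏ j ∈ univ.filter (fun j => j < i), (1 - p j * v j))
      - (∑ i, v i * p i * ∏ j ∈ univ.filter (fun j => j < i), (1 - p j))
      ≤ 2 * ∑ i, (∏ j ∈ univ.filter (fun j => j < i), (1 - p j)) * (p i - p i * v i)
        + ∑ i, (p i * ∏ j ∈ univ.filter (fun j => j < i), (1 - p j)) * (1 - v i) := by
  have hpv : ∀ i, p i * v i ≤ p i := fun i => mul_le_of_le_one_right (hp i).1 (hv i).2
  have hreplaced := sum_mul_prod_filter_lt_one_sub_le_of_le univ (fun i _ => hpv i)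
    (fun i _ => (hp i).2)
  have hloss : ∑ i, p i * ∏ j ∈ univ with j < i, (1 - p j)
      - ∑ i, v i * p i * ∏ j ∈ univ with j < i, (1 - p j)
      = ∑ i, (p i * ∏ j ∈ univ with j < i, (1 - p j)) * (1 - v i) := by
    rw [← sum_sub_distrib]
    exact sum_congr rfl fun i _ => by ring
  have hnonneg : 0 ≤ ∑ i, (∏ j ∈ univ with j < i, (1 - p j)) * (p i - p i * v i) :=
    sum_nonneg fun i _ => mul_nonneg
      (prod_nonneg fun j _ => sub_nonneg.2 (hp j).2) (sub_nonneg.2 (hpv i))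
  simp only [one_mul] at hreplaced ⊢
  linarith

theorem replacement_error_bound
    {k : ℕ} (p v : Fin k → ℝ)
    (hp : ∀ i, p i ∈ Set.Icc (0:ℝ) 1) (hv : ∀ i, v i ∈ Set.Icc (0:ℝ) 1)
    (hvmono : ∀ i j : Fin k, i ≤ j → v j ≤ v i) :
    (∑ i, (1:ℝ) * (p i * v i) * ∏ j ∈ univ.filter (fun j => j < i), (1 - p j * v j))
      - (∑ i, v i * p i * ∏ j ∈ univ.filter (fun j => j < i), (1 - p j))
      ≤ 2 * ∑ i, (∏ j ∈ univ.filter (fun j => j < i), (1 - p j)) * (p i - p i * v i)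
        + ∑ i, (p i * ∏ j ∈ univ.filter (fun j => j < i), (1 - p j)) * (1 - v i) :=
  replacement_error_bound_general p v hp hv
end

section
/- Let p, v ∈ [0,1]^k with v_1 ≥ ... ≥ v_k, and let p', v' coincide with p, v except at one coordinate m where p'_m, v'_m ∈ [0,1] (with sort order preserved in both vectors). Then |r(p,v) - r(p',v')| ≤ 2 q_m(p) v'_m |p_m - p'_m| + q̃_m(p) |v_m - v'_m| where q_m(p) = ∏_{j<m}(1-p_j), q̃_m(p) = p_m q_m(p), and r(p,v) = Σ_{i=1}^k v_i p_i ∏_{j<i}(1-p_j). -/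
/-!
Changing `v` only at `m` changes the reward by exactly `(v_m - v'_m) q̃_m`, since `r` is linear
in `v`. With the other `p_j` fixed, `r` is affine in `p_m`:
`r = (reward before m) + q_m (v_m p_m + (1 - p_m) T)`, where `T` is the reward of the cascade
on the positions after `m`. As `v` is nonincreasing and the click probabilities of that cascade
sum to `1 - ∏_{j > m} (1 - p_j) ≤ 1`, we get `0 ≤ T ≤ v_m`, so the slope `q_m (v_m - T)` has
modulus at most `q_m v_m`. This proves the bound even with the constant `1` in place of `2`.
-/

open Finset

variable {ι R : Type*} [Fintype ι] [LinearOrder ι]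

section CommRing

variable [CommRing R]

def reachProb (p : ι → R) (i : ι) : R :=
  ∏ j ∈ univ.filter (fun j => j < i), (1 - p j)

def cascadeReward (p v : ι → R) : R :=
  ∑ i, v i * p i * reachProb p i

def tailReward (p v : ι → R) (m : ι) : R :=
  ∑ i ∈ univ.filter (fun i => m < i),
    v i * p i * ∏ j ∈ univ.filter (fun j => m < j ∧ j < i), (1 - p j)

theorem reachProb_of_lt (p : ι → R) {m i : ι} (hmi : m < i) :
    reachProb p i
      = reachProb p m * (1 - p m) * ∏ j ∈ univ.filter (fun j => m < j ∧ j < i), (1 - p j) := by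
  have hsplit : univ.filter (fun j => j < i)
      = insert m (univ.filter (fun j => j < m) ∪ univ.filter (fun j => m < j ∧ j < i)) := by
    ext j
    simp only [mem_filter, mem_univ, true_and, mem_insert, mem_union]
    constructor
    · intro hj
      rcases lt_trichotomy j m with h | h | h
      exacts [Or.inr (Or.inl h), Or.inl h, Or.inr (Or.inr ⟨h, hj⟩)]
    · rintro (rfl | h | h)
      exacts [hmi, h.trans hmi, h.2]
  have hdisj : Disjoint (univ.filter (fun j => j < m)) (univ.filter (fun j => m < j ∧ j < i)) :=
    disjoint_filter.2 fun j _ h h' => lt_asymm h h'.1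
  rw [reachProb, hsplit, prod_insert (by simp), prod_union hdisj, reachProb]
  ring

theorem cascadeReward_eq_head_add_tail (p v : ι → R) (m : ι) :
    cascadeReward p v
      = ∑ i ∈ univ.filter (fun i => i < m), v i * p i * reachProb p i
        + reachProb p m * (v m * p m + (1 - p m) * tailReward p v m) := by
  have hge : univ.filter (fun i => ¬ i < m) = insert m (univ.filter (fun i => m < i)) := by
    ext i
    simp only [mem_filter, mem_univ, true_and, mem_insert, not_lt]
    exact le_iff_eq_or_lt.trans (or_congr_left eq_comm)
  rw [cascadeReward, ← sum_filter_add_sum_filter_not univ (fun i => i < m), hge,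
    sum_insert (by simp), tailReward, mul_sum, mul_add, mul_sum]
  congr 2
  · ring
  · refine sum_congr rfl fun i hi => ?_
    rw [reachProb_of_lt p (mem_filter.1 hi).2]
    ring

theorem cascadeReward_sub_of_probs_eq_off {p p' : ι → R} (v : ι → R) {m : ι}
    (hpp' : ∀ i, i ≠ m → p' i = p i) :
    cascadeReward p v - cascadeReward p' v
      = (p m - p' m) * reachProb p m * (v m - tailReward p v m) := by
  have hreach : ∀ i, i ≤ m → reachProb p' i = reachProb p i := fun i hi =>
    prod_congr rfl fun j hj => by rw [hpp' j ((mem_filter.1 hj).2.trans_le hi).ne]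
  have hhead : ∑ i ∈ univ.filter (fun i => i < m), v i * p' i * reachProb p' i
      = ∑ i ∈ univ.filter (fun i => i < m), v i * p i * reachProb p i :=
    sum_congr rfl fun i hi => by
      have him := (mem_filter.1 hi).2
      rw [hpp' i him.ne, hreach i him.le]
  have htail : tailReward p' v m = tailReward p v m :=
    sum_congr rfl fun i hi => by
      rw [hpp' i (mem_filter.1 hi).2.ne']
      congr 1
      exact prod_congr rfl fun j hj => by rw [hpp' j (mem_filter.1 hj).2.1.ne']
  rw [cascadeReward_eq_head_add_tail p, cascadeReward_eq_head_add_tail p', hhead, hreach m le_rfl, htail]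
  ring

theorem cascadeReward_sub_of_values_eq_off (p : ι → R) {v v' : ι → R} {m : ι}
    (hvv' : ∀ i, i ≠ m → v' i = v i) :
    cascadeReward p v - cascadeReward p v' = (v m - v' m) * (p m * reachProb p m) := by
  rw [cascadeReward, cascadeReward, ← sum_sub_distrib, sum_eq_single m]
  · ring
  · intro i _ hi
    rw [hvv' i hi, sub_self]
  · simp

end CommRing

section Ordered

variable [CommRing R] [LinearOrder R] [IsStrictOrderedRing R]

theorem reachProb_nonneg {p : ι → R} (hp : ∀ i, p i ≤ 1) (i : ι) : 0 ≤ reachProb p i :=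
  prod_nonneg fun j _ => sub_nonneg.2 (hp j)

theorem tailReward_nonneg {p v : ι → R} (hp : ∀ i, p i ∈ Set.Icc (0 : R) 1)
    (hv : ∀ i, 0 ≤ v i) (m : ι) : 0 ≤ tailReward p v m :=
  sum_nonneg fun i _ => mul_nonneg (mul_nonneg (hv i) (hp i).1)
    (prod_nonneg fun j _ => sub_nonneg.2 (hp j).2)

theorem tailReward_le {p v : ι → R} (hp : ∀ i, p i ∈ Set.Icc (0 : R) 1)
    (hv : ∀ i, 0 ≤ v i) (hanti : Antitone v) (m : ι) : tailReward p v m ≤ v m := by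
  set s := univ.filter (fun i => m < i)
  have hclicks_le_one : ∑ i ∈ s, p i * ∏ j ∈ s.filter (fun j => j < i), (1 - p j) ≤ 1 := by
    have := prod_one_sub_ordered s p
    have : 0 ≤ ∏ i ∈ s, (1 - p i) := prod_nonneg fun j _ => sub_nonneg.2 (hp j).2
    linarith
  calc tailReward p v m
      ≤ ∑ i ∈ s, v m * (p i * ∏ j ∈ s.filter (fun j => j < i), (1 - p j)) := by
        refine sum_le_sum fun i hi => ?_
        rw [filter_filter, ← mul_assoc]
        gcongr
        · exact prod_nonneg fun j _ => sub_nonneg.2 (hp j).2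
        · exact (hp i).1
        · exact hanti (mem_filter.1 hi).2.le
    _ ≤ v m := by
        rw [← mul_sum]
        exact mul_le_of_le_one_right (hv m) hclicks_le_one

theorem abs_cascadeReward_sub_le_of_probs_eq_off {p p' v : ι → R} {m : ι}
    (hp : ∀ i, p i ∈ Set.Icc (0 : R) 1) (hv : ∀ i, 0 ≤ v i) (hanti : Antitone v)
    (hpp' : ∀ i, i ≠ m → p' i = p i) :
    |cascadeReward p v - cascadeReward p' v| ≤ reachProb p m * v m * |p m - p' m| := by
  have hT : |v m - tailReward p v m| ≤ v m :=
    have := tailReward_nonneg hp hv m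
    have := tailReward_le hp hv hanti m
    abs_le.2 ⟨by linarith [hv m], by linarith⟩
  rw [cascadeReward_sub_of_probs_eq_off v hpp', abs_mul, abs_mul,
    abs_of_nonneg (reachProb_nonneg (fun i => (hp i).2) m)]
  calc |p m - p' m| * reachProb p m * |v m - tailReward p v m|
      ≤ |p m - p' m| * reachProb p m * v m := by
        have := reachProb_nonneg (fun i => (hp i).2) m
        gcongr
    _ = reachProb p m * v m * |p m - p' m| := by ring

end Ordered

theorem single_coordinate_smoothness_general
    {k : ℕ} (p p' v v' : Fin k → ℝ) (m : Fin k)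
    (hp : ∀ i, p i ∈ Set.Icc (0:ℝ) 1) (hv : ∀ i, v i ∈ Set.Icc (0:ℝ) 1)
    (hv'm : v' m ∈ Set.Icc (0:ℝ) 1)
    (hpp' : ∀ i, i ≠ m → p' i = p i) (hvv' : ∀ i, i ≠ m → v' i = v i)
    (hv'mono : ∀ i j : Fin k, i ≤ j → v' j ≤ v' i) :
    |(∑ i, v i * p i * ∏ j ∈ univ.filter (fun j => j < i), (1 - p j))
      - ∑ i, v' i * p' i * ∏ j ∈ univ.filter (fun j => j < i), (1 - p' j)|
      ≤ 2 * (∏ j ∈ univ.filter (fun j => j < m), (1 - p j)) * v' m * |p m - p' m|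
        + (p m * ∏ j ∈ univ.filter (fun j => j < m), (1 - p j)) * |v m - v' m| := by
  change |cascadeReward p v - cascadeReward p' v'|
    ≤ 2 * reachProb p m * v' m * |p m - p' m| + (p m * reachProb p m) * |v m - v' m|
  have hv' : ∀ i, 0 ≤ v' i := fun i => by
    by_cases h : i = m
    · exact h ▸ hv'm.1
    · exact hvv' i h ▸ (hv i).1
  have hdv : |cascadeReward p v - cascadeReward p v'| = p m * reachProb p m * |v m - v' m| := by
    rw [cascadeReward_sub_of_values_eq_off p hvv', abs_mul,
      abs_of_nonneg (mul_nonneg (hp m).1 (reachProb_nonneg (fun i => (hp i).2) m))]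
    ring
  have hdp := abs_cascadeReward_sub_le_of_probs_eq_off hp hv' hv'mono hpp'
  have hpos : 0 ≤ reachProb p m * v' m * |p m - p' m| :=
    mul_nonneg (mul_nonneg (reachProb_nonneg (fun i => (hp i).2) m) (hv' m)) (abs_nonneg _)
  calc |cascadeReward p v - cascadeReward p' v'|
      ≤ |cascadeReward p v - cascadeReward p v'| + |cascadeReward p v' - cascadeReward p' v'| :=
        abs_sub_le _ _ _
    _ ≤ 2 * reachProb p m * v' m * |p m - p' m| + (p m * reachProb p m) * |v m - v' m| := by
        linarith

theorem single_coordinate_smoothness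
    {k : ℕ} (p p' v v' : Fin k → ℝ) (m : Fin k)
    (hp : ∀ i, p i ∈ Set.Icc (0:ℝ) 1) (hv : ∀ i, v i ∈ Set.Icc (0:ℝ) 1)
    (hp'm : p' m ∈ Set.Icc (0:ℝ) 1) (hv'm : v' m ∈ Set.Icc (0:ℝ) 1)
    (hpp' : ∀ i, i ≠ m → p' i = p i) (hvv' : ∀ i, i ≠ m → v' i = v i)
    (hvmono : ∀ i j : Fin k, i ≤ j → v j ≤ v i)
    (hv'mono : ∀ i j : Fin k, i ≤ j → v' j ≤ v' i) :
    |(∑ i, v i * p i * ∏ j ∈ univ.filter (fun j => j < i), (1 - p j))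
      - ∑ i, v' i * p' i * ∏ j ∈ univ.filter (fun j => j < i), (1 - p' j)|
      ≤ 2 * (∏ j ∈ univ.filter (fun j => j < m), (1 - p j)) * v' m * |p m - p' m|
        + (p m * ∏ j ∈ univ.filter (fun j => j < m), (1 - p j)) * |v m - v' m| :=
  single_coordinate_smoothness_general p p' v v' m hp hv hv'm hpp' hvv' hv'mono
end
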